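/- arXiv:1606.05419 — 4 statements merged into one kernel-verified Lean document; each statement's English description precedes it below -/
import Mathlib

section
/- Let H be a Hilbert space, φ₁,…,φₙ unit vectors in H with stability constant θ(φ₁,…,φₙ) := inf_{α≠0} ‖Σᵢ αᵢφᵢ‖² / Σᵢ ‖αᵢφᵢ‖² > 0. Let φ ∈ span{φ₁,…,φₙ} be a unit vector and V a closed subspace of H. Then dist(φ,V) ≤ sqrt(2n / θ(φ₁,…,φₙ)) · max_{1≤i≤n} dist(φᵢ,V). -/
/-!
Write `φ₀ = ∑ αᵢ φᵢ`. Distance to `V` is the norm in `H ⧸ V`, so it is subadditive and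
homogeneous, whence `dist(φ₀, V) ≤ (∑ |αᵢ|) · maxᵢ dist(φᵢ, V)`. Since the `φᵢ` are unit vectors
and `‖φ₀‖ = 1`, the definition of `θ` gives `θ · ∑ αᵢ² ≤ 1`, and Cauchy–Schwarz turns this into
`(∑ |αᵢ|)² ≤ n ∑ αᵢ² ≤ n / θ`.
-/

open Metric

theorem Metric.infDist_sum_smul_le {𝕜 ι E : Type*} [NormedField 𝕜] [SeminormedAddCommGroup E]
    [NormedSpace 𝕜 E] (V : Submodule 𝕜 E) (s : Finset ι) (α : ι → 𝕜) (v : ι → E) :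
    infDist (∑ i ∈ s, α i • v i) V ≤ ∑ i ∈ s, ‖α i‖ * infDist (v i) V := by
  have norm_mkQ (x : E) : ‖V.mkQ x‖ = infDist x V := QuotientAddGroup.norm_mk x
  simp only [← norm_mkQ, map_sum, map_smul]
  exact (norm_sum_le _ _).trans (Finset.sum_le_sum fun i _ => (norm_smul _ _).le)

theorem sInf_rayleigh_mul_le {ι E : Type*} [Fintype ι] [SeminormedAddCommGroup E]
    [NormedSpace ℝ E] (φ : ι → E) (α : ι → ℝ) :
    sInf {r : ℝ | ∃ β : ι → ℝ, β ≠ 0 ∧ r = ‖∑ i, β i • φ i‖ ^ 2 / ∑ i, ‖β i • φ i‖ ^ 2} *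
        ∑ i, ‖α i • φ i‖ ^ 2 ≤ ‖∑ i, α i • φ i‖ ^ 2 := by
  set D := ∑ i, ‖α i • φ i‖ ^ 2
  rcases (show 0 ≤ D by positivity).eq_or_lt with hD | hD
  · rw [← hD, mul_zero]
    positivity
  have hα : α ≠ 0 := by
    rintro rfl
    simp [D] at hD
  have hbdd : BddBelow {r : ℝ | ∃ β : ι → ℝ, β ≠ 0 ∧
      r = ‖∑ i, β i • φ i‖ ^ 2 / ∑ i, ‖β i • φ i‖ ^ 2} := by
    refine ⟨0, fun r ⟨β, _, hr⟩ => ?_⟩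
    rw [hr]
    positivity
  rw [← le_div_iff₀ hD]
  exact csInf_le hbdd ⟨α, hα, rfl⟩

theorem stmt_1_general {H : Type*} [NormedAddCommGroup H] [InnerProductSpace ℝ H]
    (n : ℕ) (φ : Fin n → H) (hunit : ∀ i, ‖φ i‖ = 1)
    (θ : ℝ)
    (hθ : θ = sInf {r : ℝ | ∃ α : Fin n → ℝ, α ≠ 0 ∧
      r = ‖∑ i, α i • φ i‖ ^ 2 / ∑ i, ‖α i • φ i‖ ^ 2})
    (hθpos : 0 < θ)
    (φ0 : H) (hφ0 : φ0 ∈ Submodule.span ℝ (Set.range φ)) (hφ0norm : ‖φ0‖ = 1)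
    (V : Submodule ℝ H) :
    Metric.infDist φ0 (V : Set H) ≤
      Real.sqrt (2 * n / θ) * ⨆ i, Metric.infDist (φ i) (V : Set H) := by
  obtain ⟨α, rfl⟩ := (Submodule.mem_span_range_iff_exists_fun ℝ).1 hφ0
  have hθα : θ * ∑ i, α i ^ 2 ≤ 1 := by
    simpa [hθ, norm_smul, hunit, mul_pow, hφ0norm] using sInf_rayleigh_mul_le φ α
  have hsum_abs : ∑ i, |α i| ≤ Real.sqrt (2 * n / θ) := by
    rw [Real.le_sqrt (by positivity) (by positivity), le_div_iff₀ hθpos]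
    have cauchy_schwarz := sq_sum_le_card_mul_sum_sq (s := Finset.univ) (f := fun i => |α i|)
    simp only [sq_abs, Finset.card_univ, Fintype.card_fin] at cauchy_schwarz
    calc (∑ i, |α i|) ^ 2 * θ ≤ n * (θ * ∑ i, α i ^ 2) := by nlinarith
      _ ≤ 2 * n := by nlinarith
  set M := ⨆ j, infDist (φ j) (V : Set H)
  calc infDist (∑ i, α i • φ i) V ≤ ∑ i, |α i| * infDist (φ i) V := infDist_sum_smul_le V _ α φ
    _ ≤ ∑ i, |α i| * M := by
        gcongr with i
        exact le_ciSup (f := fun j => infDist (φ j) V) (Set.finite_range _).bddAbove i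
    _ = (∑ i, |α i|) * M := (Finset.sum_mul ..).symm
    _ ≤ Real.sqrt (2 * n / θ) * M :=
        mul_le_mul_of_nonneg_right hsum_abs (Real.iSup_nonneg fun _ => infDist_nonneg)

/-- stability-constant estimate for the distance of a unit vector in the
span of nearly-orthogonal unit vectors to a closed subspace. -/
theorem stmt_1 {H : Type*} [NormedAddCommGroup H] [InnerProductSpace ℝ H] [CompleteSpace H]
    (n : ℕ) (hn : 0 < n) (φ : Fin n → H) (hunit : ∀ i, ‖φ i‖ = 1)
    (θ : ℝ)
    (hθ : θ = sInf {r : ℝ | ∃ α : Fin n → ℝ, α ≠ 0 ∧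
      r = ‖∑ i, α i • φ i‖ ^ 2 / ∑ i, ‖α i • φ i‖ ^ 2})
    (hθpos : 0 < θ)
    (φ0 : H) (hφ0 : φ0 ∈ Submodule.span ℝ (Set.range φ)) (hφ0norm : ‖φ0‖ = 1)
    (V : Submodule ℝ H) (hV : IsClosed (V : Set H)) :
    Metric.infDist φ0 (V : Set H) ≤
      Real.sqrt (2 * n / θ) * ⨆ i, Metric.infDist (φ i) (V : Set H) :=
  stmt_1_general n φ hunit θ hθ hθpos φ0 hφ0 hφ0norm V
end

section
/- Let H be a Hilbert space, a(·,·) a bounded symmetric bilinear form, S : H → H an a-symmetric operator satisfying hypothesis HC (a(Su,u)=0 iff Su=0). Let u, v be eigenvectors of S belonging to nonzero eigenvalues μ and ν respectively, with a(u,v) = 0. Then μ·a(u,u) and ν·a(v,v) have the same sign, i.e. (μ·a(u,u))·(ν·a(v,v)) > 0. -/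
lemma stmt5_aux {H : Type*} [NormedAddCommGroup H] [InnerProductSpace ℝ H]
    (a : H →L[ℝ] H →L[ℝ] ℝ) (hsymm : ∀ u v, a u v = a v u)
    (S : H →L[ℝ] H)
    (hHC : ∀ w : H, a (S w) w = 0 ↔ S w = 0)
    (μ ν : ℝ) (hμ : μ ≠ 0) (hν : ν ≠ 0)
    (u v : H)
    (hSu : S u = μ • u) (hSv : S v = ν • v)
    (horth : a u v = 0)
    (hA : 0 < μ * a u u) (hB : ν * a v v < 0) : False := by
  set A := μ * a u u with hAdef
  set B := ν * a v v with hBdef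
  have ht : (0:ℝ) < Real.sqrt (-B) := Real.sqrt_pos.mpr (by linarith)
  have hs : (0:ℝ) < Real.sqrt A := Real.sqrt_pos.mpr hA
  set t := Real.sqrt (-B)
  set s := Real.sqrt A
  have ht2 : t * t = -B := Real.mul_self_sqrt (by linarith)
  have hs2 : s * s = A := Real.mul_self_sqrt (le_of_lt hA)
  set w := t • u + s • v with hw
  have hvu : a v u = 0 := by rw [← hsymm]; exact horth
  have hSw : S w = (t * μ) • u + (s * ν) • v := by
    simp [hw, map_add, map_smul, hSu, hSv, smul_smul]
  have hzero : a (S w) w = 0 := by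
    rw [hSw, hw]
    simp [map_add, map_smul, horth, hvu]
    ring_nf
    nlinarith [ht2, hs2]
  have hSw0 : S w = 0 := (hHC w).mp hzero
  rw [hSw] at hSw0
  have hu_eq : (t * μ) • u = -((s * ν) • v) := by
    have := hSw0
    rw [add_eq_zero_iff_eq_neg] at this
    exact this
  have htμ : t * μ ≠ 0 := mul_ne_zero (ne_of_gt ht) hμ
  have hueq : u = ((-(s * ν)) / (t * μ)) • v := by
    have : u = (t * μ)⁻¹ • ((t * μ) • u) := by
      rw [smul_smul, inv_mul_cancel₀ htμ, one_smul]
    rw [this, hu_eq, ← neg_smul, smul_smul]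
    congr 1
    field_simp
  have : a u v = ((-(s * ν)) / (t * μ)) * a v v := by
    rw [hueq]; simp [map_smul]
  rw [horth] at this
  have hc : (-(s * ν)) / (t * μ) ≠ 0 :=
    div_ne_zero (neg_ne_zero.mpr (mul_ne_zero (ne_of_gt hs) hν)) htμ
  have havv : a v v = 0 := by
    rcases mul_eq_zero.mp this.symm with h | h
    · exact absurd h hc
    · exact h
  rw [hBdef, havv, mul_zero] at hB
  exact lt_irrefl 0 hB

/-- for an `a`-symmetric operator satisfying HC, the quantities `μ·a(u,u)` and
`ν·a(v,v)` have the same sign for `a`-orthogonal eigenvectors `u, v` belonging to nonzero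
eigenvalues `μ, ν`. -/
theorem stmt_5 {H : Type*} [NormedAddCommGroup H] [InnerProductSpace ℝ H] [CompleteSpace H]
    (a : H →L[ℝ] H →L[ℝ] ℝ) (hsymm : ∀ u v, a u v = a v u)
    (S : H →L[ℝ] H) (hS : ∀ u v, a (S u) v = a u (S v))
    (hHC : ∀ w : H, a (S w) w = 0 ↔ S w = 0)
    (μ ν : ℝ) (hμ : μ ≠ 0) (hν : ν ≠ 0)
    (u v : H) (hu : u ≠ 0) (hv : v ≠ 0)
    (hSu : S u = μ • u) (hSv : S v = ν • v)
    (horth : a u v = 0) :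
    0 < (μ * a u u) * (ν * a v v) := by
  have hSu0 : S u ≠ 0 := by rw [hSu]; exact smul_ne_zero hμ hu
  have hSv0 : S v ≠ 0 := by rw [hSv]; exact smul_ne_zero hν hv
  have hA : μ * a u u ≠ 0 := by
    intro h
    apply hSu0
    apply (hHC u).mp
    rw [hSu]; simp [map_smul, h] at *
  have hB : ν * a v v ≠ 0 := by
    intro h
    apply hSv0
    apply (hHC v).mp
    rw [hSv]; simp [map_smul, h] at *
  rcases hA.lt_or_gt with h1 | h1 <;> rcases hB.lt_or_gt with h2 | h2
  · exact mul_pos_of_neg_of_neg h1 h2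
  · exact absurd (stmt5_aux a hsymm S hHC ν μ hν hμ v u hSv hSu (by rw [hsymm]; exact horth) h2 h1) id
  · exact absurd (stmt5_aux a hsymm S hHC μ ν hμ hν u v hSu hSv horth h1 h2) id
  · exact mul_pos h1 h2
end

section
/- Let H be a Hilbert space, a(·,·) a bounded symmetric bilinear form, S : H → H an a-symmetric operator satisfying HC, and μ ≠ 0 an eigenvalue of S with finite-dimensional eigenspace M(μ). Then there exists a basis u₁,…,uₘ of M(μ) such that a(uᵢ,uⱼ) = 0 for i ≠ j, and all a(uᵢ,uᵢ) are nonzero and have the same sign; consequently there exist constants 0 < c_s ≤ c_b with c_s‖v‖² ≤ |a(v,v)| ≤ c_b‖v‖² for all v ∈ M(μ). -/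
/-!
For `v ∈ M(μ)` we have `a(Sv, v) = μ a(v, v)`, so HC and `μ ≠ 0` make the restriction of `a` to
`M(μ)` an anisotropic quadratic form. Over `ℝ` an anisotropic form is definite: a sign change
along a line would produce an isotropic vector. An `a`-orthogonal basis of `M(μ)`, which exists
since `a` is symmetric, therefore has diagonal entries of one sign, and the two-sided norm bound
comes from the extreme values of `|a(v, v)|` on the compact unit sphere of `M(μ)`.
-/

namespace QuadraticMap

section Real

variable {M : Type*} [AddCommGroup M] [Module ℝ M] {Q : QuadraticForm ℝ M}

theorem apply_add_smul (x y : M) (t : ℝ) :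
    Q (x + t • y) = Q y * (t * t) + polar Q x y * t + Q x := by
  rw [QuadraticMap.map_add Q, QuadraticMap.map_smul, polar_smul_right, smul_eq_mul, smul_eq_mul]
  ring

/-- If `Q x > 0 > Q y`, the quadratic `t ↦ Q (x + t • y)` has a positive discriminant, hence a real
root `t`, and then `x = -t • y` forces `Q x = t² Q y ≤ 0`. -/
theorem Anisotropic.nonneg_of_pos (hQ : Q.Anisotropic) {x : M} (hx : 0 < Q x) (y : M) :
    0 ≤ Q y := by
  by_contra! hy
  have hdiscrim : 0 ≤ discrim (Q y) (polar Q x y) (Q x) := by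
    rw [discrim]
    nlinarith [sq_nonneg (polar Q x y)]
  obtain ⟨t, ht⟩ := exists_quadratic_eq_zero hy.ne ⟨_, (Real.mul_self_sqrt hdiscrim).symm⟩
  have hxy : x = -(t • y) := eq_neg_of_add_eq_zero_left (hQ _ (by rw [apply_add_smul, ht]))
  have hQx : Q x = t * t * Q y := by rw [hxy, QuadraticMap.map_neg, QuadraticMap.map_smul, smul_eq_mul]
  nlinarith [mul_self_nonneg t]

theorem Anisotropic.posDef_or_posDef_neg (hQ : Q.Anisotropic) : Q.PosDef ∨ (-Q).PosDef := by
  by_cases h : ∃ x, 0 < Q x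
  · obtain ⟨x, hx⟩ := h
    exact Or.inl (posDef_of_nonneg (hQ.nonneg_of_pos hx) hQ)
  · push Not at h
    refine Or.inr (posDef_of_nonneg (fun y => ?_) fun y hy => hQ y ?_)
    · simpa using h y
    · simpa using hy

end Real

section Normed

variable {E : Type*} [NormedAddCommGroup E] [NormedSpace ℝ E]

theorem apply_eq_norm_sq_mul (Q : QuadraticForm ℝ E) (v : E) :
    Q v = ‖v‖ ^ 2 * Q (‖v‖⁻¹ • v) := by
  rcases eq_or_ne v 0 with rfl | hv
  · simp
  · rw [QuadraticMap.map_smul, smul_eq_mul]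
    field_simp

theorem Anisotropic.exists_mul_norm_sq_le_abs [FiniteDimensional ℝ E] {Q : QuadraticForm ℝ E}
    (hQ : Q.Anisotropic) (hQc : Continuous Q) :
    ∃ cs cb : ℝ, 0 < cs ∧ cs ≤ cb ∧ ∀ v, cs * ‖v‖ ^ 2 ≤ |Q v| ∧ |Q v| ≤ cb * ‖v‖ ^ 2 := by
  rcases subsingleton_or_nontrivial E with hE | hE
  · exact ⟨1, 1, one_pos, le_rfl, fun v => by simp [Subsingleton.elim v 0]⟩
  have hsphere : (Metric.sphere (0 : E) 1).Nonempty := NormedSpace.sphere_nonempty.mpr zero_le_one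
  obtain ⟨xs, hxs, hmin⟩ := (isCompact_sphere (0 : E) 1).exists_isMinOn hsphere
    (continuous_abs.comp hQc).continuousOn
  obtain ⟨xb, hxb, hmax⟩ := (isCompact_sphere (0 : E) 1).exists_isMaxOn hsphere
    (continuous_abs.comp hQc).continuousOn
  have hxs0 : xs ≠ 0 := ne_zero_of_mem_unit_sphere ⟨xs, hxs⟩
  refine ⟨|Q xs|, |Q xb|, abs_pos.mpr fun h => hxs0 (hQ xs h), hmin hxb, fun v => ?_⟩
  rcases eq_or_ne v 0 with rfl | hv
  · simp
  have hw : ‖v‖⁻¹ • v ∈ Metric.sphere (0 : E) 1 := by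
    rw [mem_sphere_zero_iff_norm, norm_smul, norm_inv, norm_norm,
      inv_mul_cancel₀ (norm_ne_zero_iff.mpr hv)]
  rw [apply_eq_norm_sq_mul Q v, abs_mul, abs_sq, mul_comm _ (‖v‖ ^ 2), mul_comm _ (‖v‖ ^ 2)]
  exact ⟨mul_le_mul_of_nonneg_left (hmin hw) (sq_nonneg _),
    mul_le_mul_of_nonneg_left (hmax hw) (sq_nonneg _)⟩

end Normed

end QuadraticMap

theorem Submodule.span_range_coe_basis {R M ι : Type*} [Ring R] [AddCommGroup M] [Module R M]
    {p : Submodule R M} (b : Module.Basis ι R p) : span R (Set.range fun i => (b i : M)) = p := by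
  rw [Set.range_comp' Subtype.val b, ← p.coe_subtype, span_image, b.span_eq, map_top, range_subtype]

theorem eq_zero_of_apply_self_eq_zero_of_eigenvector {K M : Type*} [Field K] [AddCommGroup M]
    [Module K M] {a : M →ₗ[K] M →ₗ[K] K} {S : M →ₗ[K] M}
    (hHC : ∀ w, a (S w) w = 0 → S w = 0) {μ : K} (hμ : μ ≠ 0) {x : M} (hx : S x = μ • x)
    (hxx : a x x = 0) : x = 0 := by
  have hSx : S x = 0 := hHC x (by rw [hx, map_smul, LinearMap.smul_apply, hxx, smul_zero])
  rw [hx] at hSx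
  exact (smul_eq_zero.mp hSx).resolve_left hμ

theorem stmt_6_general {H : Type*} [NormedAddCommGroup H] [InnerProductSpace ℝ H]
    (a : H →L[ℝ] H →L[ℝ] ℝ) (hsymm : ∀ u v, a u v = a v u)
    (S : H →L[ℝ] H)
    (hHC : ∀ w : H, a (S w) w = 0 ↔ S w = 0)
    (μ : ℝ) (hμ : μ ≠ 0)
    (Mμ : Submodule ℝ H) (hMμ : ∀ x : H, x ∈ Mμ ↔ S x = μ • x)
    [FiniteDimensional ℝ Mμ] :
    ∃ u : Fin (Module.finrank ℝ Mμ) → H,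
      (∀ i, u i ∈ Mμ) ∧ LinearIndependent ℝ u ∧
      Submodule.span ℝ (Set.range u) = Mμ ∧
      (∀ i j, i ≠ j → a (u i) (u j) = 0) ∧
      ((∀ i, 0 < a (u i) (u i)) ∨ (∀ i, a (u i) (u i) < 0)) ∧
      ∃ cs cb : ℝ, 0 < cs ∧ cs ≤ cb ∧
        ∀ v ∈ Mμ, cs * ‖v‖ ^ 2 ≤ |a v v| ∧ |a v v| ≤ cb * ‖v‖ ^ 2 := by
  let B : LinearMap.BilinForm ℝ Mμ :=
    (ContinuousLinearMap.toLinearMap₁₂ a).compl₁₂ Mμ.subtype Mμ.subtype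
  have hQ : B.toQuadraticMap.Anisotropic := fun x hx => Subtype.ext <|
    eq_zero_of_apply_self_eq_zero_of_eigenvector (a := ContinuousLinearMap.toLinearMap₁₂ a)
      (S := S.toLinearMap) (fun w => (hHC w).1) hμ ((hMμ x).1 x.2) hx
  have hQc : Continuous B.toQuadraticMap := by
    change Continuous fun x : Mμ => a x x
    fun_prop
  obtain ⟨b, hb⟩ := LinearMap.BilinForm.exists_orthogonal_basis (B := B) ⟨fun x y => hsymm x y⟩
  obtain ⟨cs, cb, hcs, hcscb, hbounds⟩ := hQ.exists_mul_norm_sq_le_abs hQc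
  refine ⟨fun i => b i, fun i => (b i).2, b.linearIndependent.map' _ Mμ.ker_subtype,
    Submodule.span_range_coe_basis b, fun i j hij => hb hij, ?_,
    cs, cb, hcs, hcscb, fun v hv => hbounds ⟨v, hv⟩⟩
  rcases hQ.posDef_or_posDef_neg with hpos | hneg
  · exact Or.inl fun i => hpos (b i) (b.ne_zero i)
  · exact Or.inr fun i => neg_pos.mp (hneg (b i) (b.ne_zero i))

/-- on the finite-dimensional eigenspace `M(μ)` (`μ ≠ 0`) of an `a`-symmetric
operator satisfying HC, there is an `a`-orthogonal basis on which `a` is definite of one sign,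
and consequently `|a(v,v)|` is equivalent to `‖v‖²` on `M(μ)`. -/
theorem stmt_6 {H : Type*} [NormedAddCommGroup H] [InnerProductSpace ℝ H] [CompleteSpace H]
    (a : H →L[ℝ] H →L[ℝ] ℝ) (hsymm : ∀ u v, a u v = a v u)
    (S : H →L[ℝ] H) (hS : ∀ u v, a (S u) v = a u (S v))
    (hHC : ∀ w : H, a (S w) w = 0 ↔ S w = 0)
    (μ : ℝ) (hμ : μ ≠ 0)
    (Mμ : Submodule ℝ H) (hMμ : ∀ x : H, x ∈ Mμ ↔ S x = μ • x)
    [FiniteDimensional ℝ Mμ] :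
    ∃ u : Fin (Module.finrank ℝ Mμ) → H,
      (∀ i, u i ∈ Mμ) ∧ LinearIndependent ℝ u ∧
      Submodule.span ℝ (Set.range u) = Mμ ∧
      (∀ i j, i ≠ j → a (u i) (u j) = 0) ∧
      ((∀ i, 0 < a (u i) (u i)) ∨ (∀ i, a (u i) (u i) < 0)) ∧
      ∃ cs cb : ℝ, 0 < cs ∧ cs ≤ cb ∧
        ∀ v ∈ Mμ, cs * ‖v‖ ^ 2 ≤ |a v v| ∧ |a v v| ≤ cb * ‖v‖ ^ 2 :=
  stmt_6_general a hsymm S hHC μ hμ Mμ hMμ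
end

section
/- Let H be a Hilbert space, T a compact operator on H, and {T_h} a family of compact operators converging to T in operator norm. Let μ be a nonzero eigenvalue of T isolated by a circle Γ in the complex plane enclosing no other spectrum of T, and define the Riesz spectral projections E = (1/2πi)∮_Γ (z−T)^{-1} dz and E_h = (1/2πi)∮_Γ (z−T_h)^{-1} dz. Suppose T_h = P_h T where P_h is a projection. Then there exists a constant C_μ such that for all sufficiently small h and all u in the eigenspace M(μ) of T, ‖u − E_h u‖ ≤ C_μ ‖(I − P_h)u‖. -/
/-! For an eigenvector `u`, `(z - P T) u = (z - μ) u + μ (u - P u)`, so applying the resolvent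
`R z` of `P T` and integrating over the circle gives
`u - E_h u = (2πi)⁻¹ ∮ (z - μ)⁻¹ μ R z (u - P u) dz`. The resolvent of `T` is bounded by some `M`
on the compact circle, and since `P T → T` in norm, `R z = R₀ z + R z (T - P T) R₀ z` with `R₀`
the resolvent of `T` yields `‖R z‖ ≤ 2M` there for large `n`. Hence
`‖u - E_h u‖ ≤ 2M ‖μ‖ ‖u - P u‖`. -/

open Filter Metric

theorem norm_left_inverse_le_two_mul {A : Type*} [NormedRing A] {a b s r : A}
    (has : a * s = 1) (hrb : r * b = 1) (hab : ‖a - b‖ * ‖s‖ ≤ 2⁻¹) : ‖r‖ ≤ 2 * ‖s‖ := by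
  have hr : r = s + r * ((a - b) * s) := by
    calc r = r * (a * s) := by rw [has, mul_one]
      _ = r * b * s + r * ((a - b) * s) := by noncomm_ring
      _ = s + r * ((a - b) * s) := by rw [hrb, one_mul]
  have : ‖r‖ ≤ ‖s‖ + ‖r‖ * (‖a - b‖ * ‖s‖) :=
    calc ‖r‖ = ‖s + r * ((a - b) * s)‖ := by rw [← hr]
      _ ≤ ‖s‖ + ‖r‖ * (‖a - b‖ * ‖s‖) := by
        grw [norm_add_le, norm_mul_le, norm_mul_le]
  nlinarith [norm_nonneg r]

namespace spectrum

theorem resolvent_eq_of_mul_eq_one {R A : Type*} [CommSemiring R] [Ring A] [Algebra R A]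
    {a b : A} {z : R} (h₁ : (algebraMap R A z - a) * b = 1)
    (h₂ : b * (algebraMap R A z - a) = 1) : resolvent a z = b :=
  Ring.inverse_unit ⟨_, b, h₁, h₂⟩

variable {𝕜 A : Type*} [NontriviallyNormedField 𝕜] [NormedRing A] [NormedAlgebra 𝕜 A]
  [CompleteSpace A]

theorem continuousOn_resolvent (a : A) : ContinuousOn (resolvent a) (resolventSet 𝕜 a) :=
  fun _ hk => (hasDerivAt_resolvent_const_left hk).continuousAt.continuousWithinAt

theorem exists_norm_resolvent_le (a : A) {K : Set 𝕜} (hK : IsCompact K)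
    (hKa : K ⊆ resolventSet 𝕜 a) : ∃ M, 0 < M ∧ ∀ z ∈ K, ‖resolvent a z‖ ≤ M := by
  obtain ⟨M, hM⟩ := hK.exists_bound_of_continuousOn ((continuousOn_resolvent a).mono hKa)
  exact ⟨max M 1, by positivity, fun z hz => (hM z hz).trans (le_max_left _ _)⟩

theorem eventually_norm_left_inverse_le {ι : Type*} {l : Filter ι} (a : A) {b : ι → A}
    (hb : Tendsto (fun n => ‖a - b n‖) l (nhds 0)) {K : Set 𝕜} (hK : IsCompact K)
    (hKa : K ⊆ resolventSet 𝕜 a) :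
    ∃ C, ∀ᶠ n in l, ∀ z ∈ K, ∀ r : A, r * (algebraMap 𝕜 A z - b n) = 1 → ‖r‖ ≤ C := by
  obtain ⟨M, hM0, hM⟩ := exists_norm_resolvent_le a hK hKa
  refine ⟨2 * M, ?_⟩
  filter_upwards [hb.eventually_le_const (by positivity : (0 : ℝ) < (2 * M)⁻¹)]
    with n hn z hz r hr
  have hres : (algebraMap 𝕜 A z - a) * resolvent a z = 1 :=
    Ring.mul_inverse_cancel _ (mem_resolventSet_iff.mp (hKa hz))
  refine (norm_left_inverse_le_two_mul hres hr ?_).trans (by gcongr; exact hM z hz)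
  calc ‖algebraMap 𝕜 A z - a - (algebraMap 𝕜 A z - b n)‖ * ‖resolvent a z‖
      ≤ (2 * M)⁻¹ * M := by
        rw [sub_sub_sub_cancel_left, norm_sub_rev]
        gcongr
        exact hM z hz
    _ = 2⁻¹ := by field_simp

end spectrum

theorem ContinuousLinearMap.circleIntegral_apply {E F : Type*} [NormedAddCommGroup E]
    [NormedSpace ℂ E] [NormedAddCommGroup F] [NormedSpace ℂ F] {f : ℂ → E →L[ℂ] F} {c : ℂ}
    {R : ℝ} (hf : CircleIntegrable f c R) (v : E) :
    (∮ z in C(c, R), f z) v = ∮ z in C(c, R), f z v := by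
  simp only [circleIntegral, intervalIntegral_apply ((circleIntegrable_iff R).mp hf),
    smul_apply]

theorem norm_sub_two_pi_I_inv_smul_circleIntegral_le {E : Type*} [NormedAddCommGroup E]
    [NormedSpace ℂ E] [CompleteSpace E] {c : ℂ} {r : ℝ} (hr : 0 < r) {f g : ℂ → E} {u : E}
    {K : ℝ} (hg : ContinuousOn g (sphere c r)) (hgK : ∀ z ∈ sphere c r, ‖g z‖ ≤ K)
    (hf : ∀ z ∈ sphere c r, f z = (z - c)⁻¹ • (u - g z)) :
    ‖u - (2 * Real.pi * Complex.I : ℂ)⁻¹ • ∮ z in C(c, r), f z‖ ≤ K := by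
  have hz : ∀ z ∈ sphere c r, ‖z - c‖ = r := fun z => mem_sphere_iff_norm.mp
  have hinv : ContinuousOn (fun z : ℂ => (z - c)⁻¹) (sphere c r) :=
    (continuousOn_id.sub continuousOn_const).inv₀ fun _ hzc =>
      sub_ne_zero.mpr (ne_of_mem_sphere hzc hr.ne')
  have h2piI : (2 * Real.pi * Complex.I : ℂ) ≠ 0 := by simp [Real.pi_ne_zero]
  have hsplit : u - (2 * Real.pi * Complex.I : ℂ)⁻¹ • ∮ z in C(c, r), f z =
      (2 * Real.pi * Complex.I : ℂ)⁻¹ • ∮ z in C(c, r), (z - c)⁻¹ • g z := by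
    rw [circleIntegral.integral_congr hr.le hf]
    simp only [smul_sub]
    have hu : CircleIntegrable (fun z => (z - c)⁻¹ • u) c r :=
      (hinv.smul continuousOn_const).circleIntegrable hr.le
    have hgc : CircleIntegrable (fun z => (z - c)⁻¹ • g z) c r :=
      (hinv.smul hg).circleIntegrable hr.le
    rw [circleIntegral.integral_sub hu hgc, circleIntegral.integral_smul_const,
      circleIntegral.integral_sub_center_inv c hr.ne', smul_sub, inv_smul_smul₀ h2piI,
      sub_sub_cancel]
  rw [hsplit]
  calc _ ≤ r * (r⁻¹ * K) := by
        refine circleIntegral.norm_two_pi_i_inv_smul_integral_le_of_norm_le_const hr.le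
          fun z hzs => ?_
        rw [norm_smul, norm_inv, hz z hzs]
        gcongr
        exact hgK z hzs
    _ = K := by field_simp

theorem ContinuousLinearMap.apply_eigenvector_of_comp_eq_one {𝕜 E : Type*} [NormedField 𝕜]
    [NormedAddCommGroup E] [NormedSpace 𝕜 E] {T P R : E →L[𝕜] E} {μ z : 𝕜} {u : E}
    (hu : T u = μ • u) (hR : R.comp (z • 1 - P.comp T) = 1) (hz : z ≠ μ) :
    R u = (z - μ)⁻¹ • (u - μ • R (u - P u)) := by
  have hzu : (z • 1 - P.comp T) u = (z - μ) • u + μ • (u - P u) := by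
    simp [hu, sub_smul, smul_sub]
  have : u = (z - μ) • R u + μ • R (u - P u) := by
    have := congrArg (· u) hR
    simp only [comp_apply] at this
    rw [hzu, map_add, map_smul, map_smul] at this
    exact this.symm
  rw [eq_inv_smul_iff₀ (sub_ne_zero.mpr hz), eq_sub_iff_add_eq, ← this]

theorem stmt_11_general {H : Type*} [NormedAddCommGroup H] [InnerProductSpace ℂ H] [CompleteSpace H]
    (T : H →L[ℂ] H) (μ : ℂ) (r : ℝ) (hr : 0 < r)
    (hΓ : ∀ z ∈ sphere μ r, z ∉ spectrum ℂ T)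
    (P : ℕ → H →L[ℂ] H)
    (hconv : Tendsto (fun n => ‖T - (P n).comp T‖) atTop (nhds 0))
    (R : ℕ → ℂ → H →L[ℂ] H)
    (hR : ∀ᶠ n in atTop, ∀ z ∈ sphere μ r,
      (z • (1 : H →L[ℂ] H) - (P n).comp T).comp (R n z) = 1 ∧
      (R n z).comp (z • (1 : H →L[ℂ] H) - (P n).comp T) = 1) :
    ∃ C : ℝ, ∀ᶠ n in atTop, ∀ u : H, T u = μ • u →
      ‖u - ((2 * (Real.pi : ℂ) * Complex.I)⁻¹ • ∮ z in C(μ, r), R n z) u‖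
        ≤ C * ‖u - P n u‖ := by
  simp only [← Algebra.algebraMap_eq_smul_one] at hR
  obtain ⟨C, hC⟩ := spectrum.eventually_norm_left_inverse_le T hconv (isCompact_sphere μ r)
    fun z hz => not_not.mp (hΓ z hz)
  refine ⟨‖μ‖ * C, ?_⟩
  filter_upwards [hC, hR] with n hCn hRn u hu
  have hres : Set.EqOn (resolvent ((P n).comp T)) (R n) (sphere μ r) := fun z hz =>
    spectrum.resolvent_eq_of_mul_eq_one (hRn z hz).1 (hRn z hz).2
  have hRcont : ContinuousOn (R n) (sphere μ r) :=
    ((spectrum.continuousOn_resolvent _).mono fun z hz =>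
      spectrum.mem_resolventSet_of_left_right_inverse (hRn z hz).1 (hRn z hz).2).congr
      hres.symm
  rw [smul_apply, ContinuousLinearMap.circleIntegral_apply (hRcont.circleIntegrable hr.le)]
  refine norm_sub_two_pi_I_inv_smul_circleIntegral_le hr
    (g := fun z => μ • R n z (u - P n u))
    ((continuous_const.smul ((ContinuousLinearMap.apply ℂ H _).continuous)).comp_continuousOn
      hRcont) (fun z hz => ?_) fun z hz => ?_
  · rw [norm_smul, mul_assoc]
    gcongr
    exact (R n z).le_of_opNorm_le (hCn z hz _ (hRn z hz).2) _
  · exact ContinuousLinearMap.apply_eigenvector_of_comp_eq_one hu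
      (Algebra.algebraMap_eq_smul_one (A := H →L[ℂ] H) z ▸ (hRn z hz).2)
      (ne_of_mem_sphere hz hr.ne')

/-- spectral projection estimate `‖u − E_h u‖ ≤ C_μ ‖(I − P_h)u‖` on the
eigenspace `M(μ)`, where `E_h` is the Riesz spectral projection of `T_h = P_h T` over the
circle `Γ = C(μ, r)` isolating the nonzero eigenvalue `μ` of the compact operator `T`. -/
theorem stmt_11 {H : Type*} [NormedAddCommGroup H] [InnerProductSpace ℂ H] [CompleteSpace H]
    (T : H →L[ℂ] H) (hT : IsCompactOperator (⇑T))
    (μ : ℂ) (hμ : μ ≠ 0) (r : ℝ) (hr : 0 < r)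
    (hΓ : ∀ z ∈ sphere μ r, z ∉ spectrum ℂ T)
    (honly : ∀ z ∈ ball μ r, z ∈ spectrum ℂ T → z = μ)
    (hμeig : ∃ u : H, u ≠ 0 ∧ T u = μ • u)
    (P : ℕ → H →L[ℂ] H) (hP : ∀ n, (P n).comp (P n) = P n)
    (hconv : Tendsto (fun n => ‖T - (P n).comp T‖) atTop (nhds 0))
    (R : ℕ → ℂ → H →L[ℂ] H)
    (hR : ∀ᶠ n in atTop, ∀ z ∈ sphere μ r,
      (z • (1 : H →L[ℂ] H) - (P n).comp T).comp (R n z) = 1 ∧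
      (R n z).comp (z • (1 : H →L[ℂ] H) - (P n).comp T) = 1) :
    ∃ C : ℝ, ∀ᶠ n in atTop, ∀ u : H, T u = μ • u →
      ‖u - ((2 * (Real.pi : ℂ) * Complex.I)⁻¹ • ∮ z in C(μ, r), R n z) u‖
        ≤ C * ‖u - P n u‖ :=
  stmt_11_general T μ r hr hΓ P hconv R hR
end
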